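/- Let g = ⊕_{j∈ℤ} g(j) be the eigenspace decomposition of a Lie algebra under ad h, let e ∈ g(2), χ(x) = (e|x) for an invariant symmetric form, let l ⊆ g(-1) be a subspace that is isotropic for the form ω_χ(x,y) = χ([x,y]), and set m := l ⊕ ⊕_{j<-1} g(j). Then χ vanishes on [m,m]; i.e., χ restricts to a Lie algebra character of m. -/

import Mathlib

/-!
Grade `g` by the eigenvalues of `ad h`. Then `⁅g(i), g(j)⁆ ⊆ g(i + j)`, and invariance gives
`χ ⁅h, w⁆ = (⁅e, h⁆ | w) = -2 χ w`, so `χ` vanishes on every `g(k)` with `k ≠ -2`.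
For `x, y ∈ m` the only pairs of components of `x` and `y` whose bracket can land in degree `-2`
are those in `l × l`, and these are killed by the isotropy of `l`.
-/

open Module.End LieAlgebra Submodule

namespace LieAlgebra

variable {R L : Type*} [CommRing R] [LieRing L] [LieAlgebra R L]

theorem lie_mem_eigenspace_ad_add {h x y : L} {a b : R}
    (hx : x ∈ eigenspace (ad R L h) a) (hy : y ∈ eigenspace (ad R L h) b) :
    ⁅x, y⁆ ∈ eigenspace (ad R L h) (a + b) := by
  rw [mem_eigenspace_iff, ad_apply] at *
  rw [leibniz_lie, hx, hy, smul_lie, lie_smul, add_smul]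

theorem map₂_ad_eigenspace_le (h : L) (a b : R) :
    map₂ (ad R L : L →ₗ[R] Module.End R L) (eigenspace (ad R L h) a) (eigenspace (ad R L h) b)
      ≤ eigenspace (ad R L h) (a + b) :=
  map₂_le.mpr fun _ hx _ hy => lie_mem_eigenspace_ad_add hx hy

end LieAlgebra

section InvariantForm

variable {K g : Type*} [Field K] [LieRing g] [LieAlgebra K g] {B : g →ₗ[K] g →ₗ[K] K}

theorem apply_lie_eq_neg_mul_of_lie_eq_smul (hinv : ∀ x y z : g, B ⁅x, y⁆ z = B x ⁅y, z⁆)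
    {h e : g} {c : K} (he : ⁅h, e⁆ = c • e) (w : g) : B e ⁅h, w⁆ = -(c * B e w) := by
  rw [← hinv, ← lie_skew, he]
  simp

theorem eigenspace_ad_le_ker_of_add_ne_zero (hinv : ∀ x y z : g, B ⁅x, y⁆ z = B x ⁅y, z⁆)
    {h e : g} {c : K} (he : ⁅h, e⁆ = c • e) {μ : K} (hμ : μ + c ≠ 0) :
    eigenspace (ad K g h) μ ≤ LinearMap.ker (B e) := by
  intro w hw
  rw [mem_eigenspace_iff, ad_apply] at hw
  have key := apply_lie_eq_neg_mul_of_lie_eq_smul hinv he w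
  rw [hw, map_smul, smul_eq_mul] at key
  have : (μ + c) * B e w = 0 := by linear_combination key
  exact (mul_eq_zero.mp this).resolve_left hμ

theorem map₂_ad_eigenspace_le_ker_of_add_ne_neg_two [CharZero K]
    (hinv : ∀ x y z : g, B ⁅x, y⁆ z = B x ⁅y, z⁆)
    {h e : g} (he : ⁅h, e⁆ = (2 : K) • e) {i j : ℤ} (hij : i + j ≠ -2) :
    map₂ (ad K g : g →ₗ[K] Module.End K g) (eigenspace (ad K g h) (i : K))
      (eigenspace (ad K g h) (j : K)) ≤ LinearMap.ker (B e) := by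
  refine (map₂_ad_eigenspace_le h _ _).trans (eigenspace_ad_le_ker_of_add_ne_zero hinv he ?_)
  exact_mod_cast (by omega : i + j + 2 ≠ 0)

end InvariantForm

theorem chi_is_character_of_m_general {K : Type*} [Field K] [CharZero K]
    {g : Type*} [LieRing g] [LieAlgebra K g]
    (B : g →ₗ[K] g →ₗ[K] K)
    (hinv : ∀ x y z : g, B ⁅x, y⁆ z = B x ⁅y, z⁆)
    (h e : g) (hhe : ⁅h, e⁆ = (2 : K) • e)
    (l : Submodule K g)
    (hl : l ≤ Module.End.eigenspace (LieAlgebra.ad K g h) ((-1 : ℤ) : K))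
    (hiso : ∀ x ∈ l, ∀ y ∈ l, B e ⁅x, y⁆ = 0)
    (m : Submodule K g)
    (hm : m = l ⊔ ⨆ j : ℤ, ⨆ _ : j ≤ -2,
      Module.End.eigenspace (LieAlgebra.ad K g h) (j : K)) :
    ∀ x ∈ m, ∀ y ∈ m, B e ⁅x, y⁆ = 0 := by
  suffices map₂ (ad K g : g →ₗ[K] Module.End K g) m m ≤ LinearMap.ker (B e) from
    fun x hx y hy => this (apply_mem_map₂ _ hx hy)
  have graded (i j : ℤ) (hij : i + j ≠ -2) :=
    map₂_ad_eigenspace_le_ker_of_add_ne_neg_two (e := e) hinv hhe hij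
  subst hm
  simp only [map₂_sup_left, map₂_sup_right, map₂_iSup_left, map₂_iSup_right, sup_le_iff,
    iSup_le_iff]
  refine ⟨⟨map₂_le.mpr hiso, fun i hi => ?_⟩, fun j hj => ⟨?_, fun i hi => graded i j (by omega)⟩⟩
  · exact (map₂_le_map₂_right hl).trans (graded i (-1) (by omega))
  · exact (map₂_le_map₂_left hl).trans (graded (-1) j (by omega))

/-- Let `g = ⊕ g(j)` be the `ad h`-eigenspace decomposition, `e ∈ g(2)`,
`χ x = B e x` for an invariant symmetric form `B`, `l ⊆ g(-1)` isotropic for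
`ω_χ(x,y) = χ [x,y]`, and `m = l ⊕ ⊕_{j ≤ -2} g(j)`. Then `χ` vanishes on `[m,m]`,
i.e. `χ` restricts to a Lie algebra character of `m`. -/
theorem chi_is_character_of_m {K : Type*} [Field K] [CharZero K]
    {g : Type*} [LieRing g] [LieAlgebra K g]
    (B : g →ₗ[K] g →ₗ[K] K)
    (hsymm : ∀ x y : g, B x y = B y x)
    (hinv : ∀ x y z : g, B ⁅x, y⁆ z = B x ⁅y, z⁆)
    (h e : g) (hhe : ⁅h, e⁆ = (2 : K) • e)
    (l : Submodule K g)
    (hl : l ≤ Module.End.eigenspace (LieAlgebra.ad K g h) ((-1 : ℤ) : K))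
    (hiso : ∀ x ∈ l, ∀ y ∈ l, B e ⁅x, y⁆ = 0)
    (m : Submodule K g)
    (hm : m = l ⊔ ⨆ j : ℤ, ⨆ _ : j ≤ -2,
      Module.End.eigenspace (LieAlgebra.ad K g h) (j : K)) :
    ∀ x ∈ m, ∀ y ∈ m, B e ⁅x, y⁆ = 0 :=
  chi_is_character_of_m_general B hinv h e hhe l hl hiso m hm
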